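/- arXiv:2602.09490 — 6 statements merged into one kernel-verified Lean document; each statement's English description precedes it below -/
import Mathlib

section
/- Let U(μ) = V(‖μ − b‖) as above with V'' > 0, V'(r) > 0 for r ≠ 0. Fix μ ≠ b and r* > 0. Over the closed ball T = {μ' : ‖μ' − b‖ ≤ r*}, the Bregman distance D_U(μ, μ') is maximized uniquely at the antipodal boundary point μ' = b + r*·(b − μ)/‖b − μ‖. -/
/-!
Write `x = μ' - b`, `w = b - μ` and `r = ‖x‖`. Then `D μ' = V ‖w‖ - T_r(-⟪x, w⟫ / r)`, where
`T_r p = V r + V' r (p - r)` is the tangent line of `V` at `r`. Cauchy–Schwarz gives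
`-⟪x, w⟫ / r ≥ -‖w‖`, with equality only when `x` points along `w`, and `T_r` is nondecreasing
since `V' ≥ 0` on `[0, ∞)`; so `D μ' ≤ V ‖w‖ - T_r(-‖w‖)`. By strict convexity of `V`, the value
`T_r(-‖w‖)` strictly decreases in `r ≥ 0`, so the bound is largest at `r = r*`, where it is
attained exactly at the antipodal point `b + r* • w / ‖w‖`.
-/

open RealInnerProductSpace

section InnerProduct

variable {F : Type*} [NormedAddCommGroup F] [InnerProductSpace ℝ F]

theorem real_inner_div_norm_le_norm (x y : F) : ⟪x, y⟫ / ‖x‖ ≤ ‖y‖ := by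
  rcases eq_or_ne x 0 with rfl | hx
  · simp
  rw [div_le_iff₀ (norm_pos_iff.2 hx), mul_comm]
  exact real_inner_le_norm x y

theorem real_inner_div_norm_lt_norm {x y : F} (hy : y ≠ 0) (hxy : x ≠ (‖x‖ / ‖y‖) • y) :
    ⟪x, y⟫ / ‖x‖ < ‖y‖ := by
  have hx : x ≠ 0 := by
    rintro rfl
    simp at hxy
  rw [div_lt_iff₀ (norm_pos_iff.2 hx), mul_comm, inner_lt_norm_mul_iff_real]
  intro h
  apply hxy
  rw [div_eq_inv_mul, mul_smul, ← h, smul_smul, inv_mul_cancel₀ (norm_ne_zero_iff.2 hy), one_smul]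

theorem norm_div_norm_smul {y : F} (hy : y ≠ 0) {t : ℝ} (ht : 0 ≤ t) : ‖(t / ‖y‖) • y‖ = t := by
  rw [norm_smul, Real.norm_eq_abs, abs_div, abs_of_nonneg ht, abs_norm,
    div_mul_cancel₀ _ (norm_ne_zero_iff.2 hy)]

theorem real_inner_div_norm_smul_self (t : ℝ) (y : F) : ⟪(t / ‖y‖) • y, y⟫ = t * ‖y‖ := by
  rw [real_inner_smul_left, real_inner_self_eq_norm_mul_norm]
  rcases eq_or_ne ‖y‖ 0 with h | h
  · simp [h]
  · field_simp

end InnerProduct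

/-- Evaluated at a fixed `p`, the tangent line of a strictly convex `V` at `r` decreases
in `r ≥ p`. -/
theorem add_deriv_mul_sub_lt_of_strictMono_deriv {V : ℝ → ℝ} (hV : Differentiable ℝ V)
    (hV' : StrictMono (deriv V)) {p r s : ℝ} (hpr : p ≤ r) (hrs : r < s) :
    V s + deriv V s * (p - s) < V r + deriv V r * (p - r) := by
  have hslope : (V s - V r) / (s - r) < deriv V s := by
    rw [← slope_def_field]
    exact (hV'.strictConvexOn_univ_of_deriv hV.continuous).slope_lt_deriv
      (Set.mem_univ r) (Set.mem_univ s) hrs (hV s)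
  have hsecant : V s - V r < deriv V s * (s - r) := by
    rwa [div_lt_iff₀ (sub_pos.2 hrs)] at hslope
  have hderiv : deriv V r * (r - p) ≤ deriv V s * (r - p) :=
    mul_le_mul_of_nonneg_right (hV'.monotone hrs.le) (sub_nonneg.2 hpr)
  linarith

theorem stmt5_general (N : ℕ) (b : EuclideanSpace ℝ (Fin N)) (V : ℝ → ℝ)
    (hV : Differentiable ℝ V)
    (hVpos : ∀ r : ℝ, r ≠ 0 → 0 < deriv V r)
    (hVpp : ∀ r : ℝ, 0 < deriv (deriv V) r)
    (μ : EuclideanSpace ℝ (Fin N)) (hμ : μ ≠ b) (rs : ℝ) (hrs : 0 < rs)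
    (D : EuclideanSpace ℝ (Fin N) → ℝ)
    (hD : ∀ μ', D μ' = V ‖μ - b‖ - V ‖μ' - b‖ -
      deriv V ‖μ' - b‖ * ((inner ℝ (μ' - b) (μ - b) : ℝ) / ‖μ' - b‖ - ‖μ' - b‖)) :
    ∀ μ', ‖μ' - b‖ ≤ rs → μ' ≠ b + (rs / ‖b - μ‖) • (b - μ) →
      D μ' < D (b + (rs / ‖b - μ‖) • (b - μ)) := by
  rintro μ' hle hne
  obtain ⟨x, rfl⟩ : ∃ x, μ' = b + x := ⟨μ' - b, by abel⟩
  rw [add_sub_cancel_left] at hle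
  have hxw : x ≠ (rs / ‖b - μ‖) • (b - μ) := fun h => hne (by rw [h])
  have hw : b - μ ≠ 0 := sub_ne_zero.2 hμ.symm
  have hVmono : StrictMono (deriv V) := strictMono_of_deriv_pos hVpp
  have hD' : ∀ x, D (b + x) = V ‖b - μ‖ -
      (V ‖x‖ + deriv V ‖x‖ * (-(⟪x, b - μ⟫ / ‖x‖) - ‖x‖)) := by
    intro x
    rw [hD, add_sub_cancel_left, norm_sub_rev, ← neg_sub b μ, inner_neg_right, neg_div]
    ring
  rw [hD', hD', norm_div_norm_smul hw hrs.le, real_inner_div_norm_smul_self,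
    mul_div_cancel_left₀ _ hrs.ne', sub_lt_sub_iff_left]
  have hVnonneg : 0 ≤ deriv V ‖x‖ :=
    ((hVpos (-1) (by norm_num)).trans (hVmono (by linarith [norm_nonneg x]))).le
  have hCS : deriv V ‖x‖ * (-‖b - μ‖ - ‖x‖) ≤ deriv V ‖x‖ * (-(⟪x, b - μ⟫ / ‖x‖) - ‖x‖) := by
    gcongr
    exact real_inner_div_norm_le_norm x (b - μ)
  rcases hle.lt_or_eq with hlt | rfl
  · have htangent := add_deriv_mul_sub_lt_of_strictMono_deriv hV hVmono
      (by linarith [norm_nonneg x, norm_nonneg (b - μ)] : -‖b - μ‖ ≤ ‖x‖) hlt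
    linarith
  · have hCS' : deriv V ‖x‖ * (-‖b - μ‖ - ‖x‖) < deriv V ‖x‖ * (-(⟪x, b - μ⟫ / ‖x‖) - ‖x‖) := by
      gcongr
      · exact hVpos _ hrs.ne'
      · exact real_inner_div_norm_lt_norm hw hxw
    linarith

/-- Over the closed ball of radius `r*` around `b`, the Bregman distance associated with
`U(μ) = V(‖μ − b‖)` is uniquely maximized at the antipodal boundary point
`b + r*·(b − μ)/‖b − μ‖`. -/
theorem stmt5 (N : ℕ) (hN : 1 ≤ N) (b : EuclideanSpace ℝ (Fin N)) (V : ℝ → ℝ)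
    (hV : Differentiable ℝ V) (hV' : Differentiable ℝ (deriv V))
    (hVpos : ∀ r : ℝ, r ≠ 0 → 0 < deriv V r)
    (hVpp : ∀ r : ℝ, 0 < deriv (deriv V) r)
    (μ : EuclideanSpace ℝ (Fin N)) (hμ : μ ≠ b) (rs : ℝ) (hrs : 0 < rs)
    (D : EuclideanSpace ℝ (Fin N) → ℝ)
    (hD : ∀ μ', D μ' = V ‖μ - b‖ - V ‖μ' - b‖ -
      deriv V ‖μ' - b‖ * ((inner ℝ (μ' - b) (μ - b) : ℝ) / ‖μ' - b‖ - ‖μ' - b‖)) :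
    ∀ μ', ‖μ' - b‖ ≤ rs → μ' ≠ b + (rs / ‖b - μ‖) • (b - μ) →
      D μ' < D (b + (rs / ‖b - μ‖) • (b - μ)) :=
  stmt5_general N b V hV hVpos hVpp μ hμ rs hrs D hD
end

section
/- Let α ∈ (1/2, 1), r₀ > 0, and let τ : [0, r₀] → ℝ be a continuous strictly positive probability density. Define L(r*) = (2α − 1)∫_{r*}^{r₀} (r − r*) τ(r) dr and R(r*) = (1 − α)(∫_0^{r*} (r + r*) τ(r) dr + ∫_{r*}^{r₀} 2 r* τ(r) dr). Then the equation L(r*) = R(r*) has a unique solution r*(α) ∈ (0, r₀); moreover L is continuous and strictly decreasing in r* on [0, r₀], and R is continuous and strictly increasing in r* on [0, r₀], with L(0) > 0 = R(0) and L(r₀) = 0 < R(r₀). -/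
/-! On `[0, r₀]` both sides of the balancing equation are integrals of a kernel against `τ`:
`∫_{s}^{r₀} (r - s) τ = ∫_0^{r₀} max (r - s) 0 · τ` and
`∫_0^{s} (r + s) τ + ∫_{s}^{r₀} 2 s τ = ∫_0^{r₀} (s + min r s) · τ`.
Both kernels are jointly continuous, the first antitone and the second monotone in `s`, strictly
at `r = r₀`; since `τ > 0` this makes `L` strictly decreasing and `R` strictly increasing.
So `L - R` is continuous, strictly decreasing, positive at `0` and negative at `r₀`, and the
intermediate value theorem gives a unique zero. -/

open Set MeasureTheory intervalIntegral

theorem integral_eq_add_of_eqOn {f g h : ℝ → ℝ} {a b c : ℝ} (hab : a ≤ b) (hbc : b ≤ c)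
    (hf : IntervalIntegrable f volume a c) (hg : EqOn f g (Icc a b))
    (hh : EqOn f h (Icc b c)) :
    ∫ x in a..c, f x = (∫ x in a..b, g x) + ∫ x in b..c, h x := by
  have hb : b ∈ uIcc a c := by rw [uIcc_of_le (hab.trans hbc)]; exact ⟨hab, hbc⟩
  rw [← integral_add_adjacent_intervals (hf.mono_set (uIcc_subset_uIcc_left hb))
    (hf.mono_set (uIcc_subset_uIcc_right hb))]
  exact congr_arg₂ (· + ·) (integral_congr (by rwa [uIcc_of_le hab]))
    (integral_congr (by rwa [uIcc_of_le hbc]))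

theorem continuous_integral_mul_of_continuousOn {k : ℝ → ℝ → ℝ} {τ : ℝ → ℝ} {a b : ℝ}
    (hab : a ≤ b) (hk : Continuous k.uncurry) (hτ : ContinuousOn τ (Icc a b)) :
    Continuous fun s => ∫ r in a..b, k s r * τ r := by
  obtain ⟨τ', hτ', hττ'⟩ : ∃ τ' : ℝ → ℝ, Continuous τ' ∧ EqOn τ τ' (Icc a b) :=
    ⟨IccExtend hab ((Icc a b).domRestrict τ), continuous_IccExtend_iff.2 hτ.domRestrict,
      fun r hr => by rw [IccExtend_of_mem hab _ hr, domRestrict_apply]⟩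
  have heq (s : ℝ) : ∫ r in a..b, k s r * τ r = ∫ r in a..b, k s r * τ' r :=
    integral_congr fun r hr => by rw [hττ' (uIcc_of_le hab ▸ hr)]
  simp only [heq]
  exact continuous_parametric_intervalIntegral_of_continuous' (by fun_prop) a b

theorem integral_mul_lt_integral_mul {f g τ : ℝ → ℝ} {a b : ℝ} (hab : a < b)
    (hf : ContinuousOn f (Icc a b)) (hg : ContinuousOn g (Icc a b))
    (hτ : ContinuousOn τ (Icc a b)) (hτ_nonneg : ∀ x ∈ Icc a b, 0 ≤ τ x)
    (hle : ∀ x ∈ Icc a b, f x ≤ g x) (hlt : ∃ c ∈ Icc a b, f c < g c ∧ 0 < τ c) :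
    ∫ x in a..b, f x * τ x < ∫ x in a..b, g x * τ x := by
  obtain ⟨c, hc, hfg, hτc⟩ := hlt
  exact integral_lt_integral_of_continuousOn_of_le_of_exists_lt hab (hf.mul hτ) (hg.mul hτ)
    (fun x hx => mul_le_mul_of_nonneg_right (hle x (Ioc_subset_Icc_self hx))
      (hτ_nonneg x (Ioc_subset_Icc_self hx)))
    ⟨c, hc, mul_lt_mul_of_pos_right hfg hτc⟩

theorem exists_unique_eq_of_strictAntiOn_of_strictMonoOn {f g : ℝ → ℝ} {a b : ℝ} (hab : a ≤ b)
    (hf : ContinuousOn f (Icc a b)) (hg : ContinuousOn g (Icc a b))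
    (hf_anti : StrictAntiOn f (Icc a b)) (hg_mono : StrictMonoOn g (Icc a b))
    (ha : g a < f a) (hb : f b < g b) :
    ∃! x, x ∈ Ioo a b ∧ f x = g x := by
  have h_anti : StrictAntiOn (f - g) (Icc a b) := fun x hx y hy hxy => by
    simp only [Pi.sub_apply]; linarith [hf_anti hx hy hxy, hg_mono hx hy hxy]
  obtain ⟨c, hc, hc_zero⟩ := intermediate_value_Icc' hab (hf.sub hg)
    ⟨(sub_neg.2 hb).le, (sub_pos.2 ha).le⟩
  have hc0 : f c = g c := sub_eq_zero.1 hc_zero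
  refine ⟨c, ⟨⟨hc.1.lt_of_ne ?_, hc.2.lt_of_ne ?_⟩, hc0⟩, fun x ⟨hx, hfx⟩ => ?_⟩
  · rintro rfl; exact ha.ne' hc0
  · rintro rfl; exact hb.ne hc0
  · exact h_anti.injOn (Ioo_subset_Icc_self hx) hc (by simp [hfx, hc0])

section BalancingIntegrals

variable {τ : ℝ → ℝ} {a b : ℝ}

theorem integral_sub_mul_eq_integral_max_mul (hτ : ContinuousOn τ (Icc a b)) {s : ℝ}
    (hs : s ∈ Icc a b) :
    ∫ r in s..b, (r - s) * τ r = ∫ r in a..b, max (r - s) 0 * τ r := by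
  have hint : IntervalIntegrable (fun r => max (r - s) 0 * τ r) volume a b :=
    ContinuousOn.intervalIntegrable_of_Icc (hs.1.trans hs.2) (by fun_prop)
  rw [integral_eq_add_of_eqOn hs.1 hs.2 hint (g := fun _ => 0) (h := fun r => (r - s) * τ r)]
  · simp
  · intro r hr
    simp [max_eq_right (sub_nonpos.2 hr.2)]
  · intro r hr
    simp [max_eq_left (sub_nonneg.2 hr.1)]

theorem integral_add_mul_add_integral_eq_integral_min_mul (hτ : ContinuousOn τ (Icc a b))
    {s : ℝ} (hs : s ∈ Icc a b) :
    (∫ r in a..s, (r + s) * τ r) + ∫ r in s..b, 2 * s * τ r =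
      ∫ r in a..b, (s + min r s) * τ r := by
  have hint : IntervalIntegrable (fun r => (s + min r s) * τ r) volume a b :=
    ContinuousOn.intervalIntegrable_of_Icc (hs.1.trans hs.2) (by fun_prop)
  rw [integral_eq_add_of_eqOn hs.1 hs.2 hint]
  · intro r hr
    simp only [min_eq_left hr.2, add_comm]
  · intro r hr
    simp only [min_eq_right hr.1, two_mul]

theorem continuousOn_integral_sub_mul (hab : a ≤ b) (hτ : ContinuousOn τ (Icc a b)) :
    ContinuousOn (fun s => ∫ r in s..b, (r - s) * τ r) (Icc a b) :=
  (continuous_integral_mul_of_continuousOn hab (by fun_prop) hτ).continuousOn.congr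
    fun _ hs => integral_sub_mul_eq_integral_max_mul hτ hs

theorem continuousOn_integral_add_mul_add_integral (hab : a ≤ b)
    (hτ : ContinuousOn τ (Icc a b)) :
    ContinuousOn (fun s => (∫ r in a..s, (r + s) * τ r) + ∫ r in s..b, 2 * s * τ r)
      (Icc a b) :=
  (continuous_integral_mul_of_continuousOn hab (by fun_prop) hτ).continuousOn.congr
    fun _ hs => integral_add_mul_add_integral_eq_integral_min_mul hτ hs

theorem strictAntiOn_integral_sub_mul (hτ : ContinuousOn τ (Icc a b))
    (hτ_pos : ∀ r ∈ Icc a b, 0 < τ r) :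
    StrictAntiOn (fun s => ∫ r in s..b, (r - s) * τ r) (Icc a b) := by
  intro x hx y hy hxy
  simp only [integral_sub_mul_eq_integral_max_mul hτ hx,
    integral_sub_mul_eq_integral_max_mul hτ hy]
  have hb : b ∈ Icc a b := right_mem_Icc.2 (hx.1.trans hx.2)
  refine integral_mul_lt_integral_mul (hx.1.trans_lt (hxy.trans_le hy.2)) (by fun_prop)
    (by fun_prop) hτ (fun r hr => (hτ_pos r hr).le) (fun r _ => by gcongr)
    ⟨b, hb, ?_, hτ_pos b hb⟩
  rw [max_eq_left (sub_nonneg.2 hy.2)]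
  exact lt_max_of_lt_left (by linarith)

theorem strictMonoOn_integral_add_mul_add_integral (hτ : ContinuousOn τ (Icc a b))
    (hτ_pos : ∀ r ∈ Icc a b, 0 < τ r) :
    StrictMonoOn (fun s => (∫ r in a..s, (r + s) * τ r) + ∫ r in s..b, 2 * s * τ r)
      (Icc a b) := by
  intro x hx y hy hxy
  simp only [integral_add_mul_add_integral_eq_integral_min_mul hτ hx,
    integral_add_mul_add_integral_eq_integral_min_mul hτ hy]
  have hb : b ∈ Icc a b := right_mem_Icc.2 (hx.1.trans hx.2)
  refine integral_mul_lt_integral_mul (hx.1.trans_lt (hxy.trans_le hy.2)) (by fun_prop)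
    (by fun_prop) hτ (fun r hr => (hτ_pos r hr).le) (fun r _ => by gcongr)
    ⟨b, hb, ?_, hτ_pos b hb⟩
  rw [min_eq_right hx.2, min_eq_right hy.2]
  linarith

end BalancingIntegrals

theorem stmt6_general (α r₀ : ℝ) (hα : α ∈ Set.Ioo (1/2 : ℝ) 1) (hr₀ : 0 < r₀)
    (τ : ℝ → ℝ) (hτc : ContinuousOn τ (Set.Icc 0 r₀))
    (hτpos : ∀ r ∈ Set.Icc (0:ℝ) r₀, 0 < τ r) :
    ContinuousOn (fun rs => (2*α - 1) * ∫ r in rs..r₀, (r - rs) * τ r) (Set.Icc 0 r₀) ∧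
    StrictAntiOn (fun rs => (2*α - 1) * ∫ r in rs..r₀, (r - rs) * τ r) (Set.Icc 0 r₀) ∧
    ContinuousOn (fun rs => (1 - α) *
      ((∫ r in (0:ℝ)..rs, (r + rs) * τ r) + ∫ r in rs..r₀, 2*rs*τ r)) (Set.Icc 0 r₀) ∧
    StrictMonoOn (fun rs => (1 - α) *
      ((∫ r in (0:ℝ)..rs, (r + rs) * τ r) + ∫ r in rs..r₀, 2*rs*τ r)) (Set.Icc 0 r₀) ∧
    0 < (2*α - 1) * ∫ r in (0:ℝ)..r₀, (r - 0) * τ r ∧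
    (1 - α) * ((∫ r in (0:ℝ)..(0:ℝ), (r + 0) * τ r) + ∫ r in (0:ℝ)..r₀, 2*0*τ r) = 0 ∧
    (2*α - 1) * (∫ r in r₀..r₀, (r - r₀) * τ r) = 0 ∧
    0 < (1 - α) * ((∫ r in (0:ℝ)..r₀, (r + r₀) * τ r) + ∫ r in r₀..r₀, 2*r₀*τ r) ∧
    (∃! rs, rs ∈ Set.Ioo 0 r₀ ∧
      (2*α - 1) * (∫ r in rs..r₀, (r - rs) * τ r) =
      (1 - α) * ((∫ r in (0:ℝ)..rs, (r + rs) * τ r) + ∫ r in rs..r₀, 2*rs*τ r)) := by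
  set L := fun rs => (2*α - 1) * ∫ r in rs..r₀, (r - rs) * τ r
  set R := fun rs =>
    (1 - α) * ((∫ r in (0:ℝ)..rs, (r + rs) * τ r) + ∫ r in rs..r₀, 2*rs*τ r)
  have hL_coeff : 0 < 2 * α - 1 := by linarith [hα.1]
  have hR_coeff : 0 < 1 - α := by linarith [hα.2]
  have hL_cont : ContinuousOn L (Icc 0 r₀) :=
    continuousOn_const.mul (continuousOn_integral_sub_mul hr₀.le hτc)
  have hR_cont : ContinuousOn R (Icc 0 r₀) :=
    continuousOn_const.mul (continuousOn_integral_add_mul_add_integral hr₀.le hτc)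
  have hL_anti : StrictAntiOn L (Icc 0 r₀) := fun x hx y hy hxy =>
    mul_lt_mul_of_pos_left (strictAntiOn_integral_sub_mul hτc hτpos hx hy hxy) hL_coeff
  have hR_mono : StrictMonoOn R (Icc 0 r₀) := fun x hx y hy hxy =>
    mul_lt_mul_of_pos_left (strictMonoOn_integral_add_mul_add_integral hτc hτpos hx hy hxy)
      hR_coeff
  have h0 : (0 : ℝ) ∈ Icc 0 r₀ := left_mem_Icc.2 hr₀.le
  have hr₀_mem : r₀ ∈ Icc 0 r₀ := right_mem_Icc.2 hr₀.le
  have hL_end : L r₀ = 0 := by simp [L]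
  have hR_start : R 0 = 0 := by simp [R]
  have hL_start : 0 < L 0 := hL_end.symm.trans_lt (hL_anti h0 hr₀_mem hr₀)
  have hR_end : 0 < R r₀ := hR_start.symm.trans_lt (hR_mono h0 hr₀_mem hr₀)
  exact ⟨hL_cont, hL_anti, hR_cont, hR_mono, hL_start, hR_start, hL_end, hR_end,
    exists_unique_eq_of_strictAntiOn_of_strictMonoOn hr₀.le hL_cont hR_cont hL_anti hR_mono
      (hR_start.trans_lt hL_start) (hL_end.trans_lt hR_end)⟩

/-- The spherical balancing equation `L(r*) = R(r*)` has a unique solution in `(0, r₀)`: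
`L` is continuous and strictly decreasing, `R` continuous and strictly increasing, with
`L(0) > 0 = R(0)` and `L(r₀) = 0 < R(r₀)`. -/
theorem stmt6 (α r₀ : ℝ) (hα : α ∈ Set.Ioo (1/2 : ℝ) 1) (hr₀ : 0 < r₀)
    (τ : ℝ → ℝ) (hτc : ContinuousOn τ (Set.Icc 0 r₀))
    (hτpos : ∀ r ∈ Set.Icc (0:ℝ) r₀, 0 < τ r)
    (hτ1 : (∫ r in (0:ℝ)..r₀, τ r) = 1) :
    ContinuousOn (fun rs => (2*α - 1) * ∫ r in rs..r₀, (r - rs) * τ r) (Set.Icc 0 r₀) ∧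
    StrictAntiOn (fun rs => (2*α - 1) * ∫ r in rs..r₀, (r - rs) * τ r) (Set.Icc 0 r₀) ∧
    ContinuousOn (fun rs => (1 - α) *
      ((∫ r in (0:ℝ)..rs, (r + rs) * τ r) + ∫ r in rs..r₀, 2*rs*τ r)) (Set.Icc 0 r₀) ∧
    StrictMonoOn (fun rs => (1 - α) *
      ((∫ r in (0:ℝ)..rs, (r + rs) * τ r) + ∫ r in rs..r₀, 2*rs*τ r)) (Set.Icc 0 r₀) ∧
    0 < (2*α - 1) * ∫ r in (0:ℝ)..r₀, (r - 0) * τ r ∧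
    (1 - α) * ((∫ r in (0:ℝ)..(0:ℝ), (r + 0) * τ r) + ∫ r in (0:ℝ)..r₀, 2*0*τ r) = 0 ∧
    (2*α - 1) * (∫ r in r₀..r₀, (r - r₀) * τ r) = 0 ∧
    0 < (1 - α) * ((∫ r in (0:ℝ)..r₀, (r + r₀) * τ r) + ∫ r in r₀..r₀, 2*r₀*τ r) ∧
    (∃! rs, rs ∈ Set.Ioo 0 r₀ ∧
      (2*α - 1) * (∫ r in rs..r₀, (r - rs) * τ r) =
      (1 - α) * ((∫ r in (0:ℝ)..rs, (r + rs) * τ r) + ∫ r in rs..r₀, 2*rs*τ r)) :=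
  stmt6_general α r₀ hα hr₀ τ hτc hτpos
end

section
/- With the setting of the spherical balancing equation (α ∈ (1/2, 1), τ continuous and strictly positive on [0, r₀]), the unique solution r*(α) is strictly increasing in α. Furthermore r*(α) → 0 as α → 1/2⁺ and r*(1) = r₀ (i.e., at α = 1 the equation is solved by r* = r₀). -/
open intervalIntegral

/-- The spherical balancing equation of the paper. -/
def balEq (r₀ : ℝ) (τ : ℝ → ℝ) (α rs : ℝ) : Prop :=
  (2*α - 1) * (∫ r in rs..r₀, (r - rs) * τ r) =
  (1 - α) * ((∫ r in (0:ℝ)..rs, (r + rs) * τ r) + ∫ r in rs..r₀, 2*rs*τ r)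

section aux

variable {r₀ : ℝ} {τ : ℝ → ℝ}

private lemma aux_ii (hτc : ContinuousOn τ (Set.Icc 0 r₀)) {f : ℝ → ℝ} (hf : Continuous f)
    {a b : ℝ} (hab : Set.uIcc a b ⊆ Set.Icc 0 r₀) :
    IntervalIntegrable (fun r => f r * τ r) MeasureTheory.volume a b :=
  (hf.continuousOn.mul (hτc.mono hab)).intervalIntegrable

private lemma aux_iiτ (hτc : ContinuousOn τ (Set.Icc 0 r₀))
    {a b : ℝ} (hab : Set.uIcc a b ⊆ Set.Icc 0 r₀) :
    IntervalIntegrable τ MeasureTheory.volume a b :=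
  (hτc.mono hab).intervalIntegrable

end aux

section aux2

variable {r₀ : ℝ} {τ : ℝ → ℝ}

/-- uIcc between two points of `Icc 0 r₀` is inside `Icc 0 r₀`. -/
private lemma uIcc_sub' (ha : (0:ℝ) ≤ r₀) {a b : ℝ} (hA : a ∈ Set.Icc 0 r₀)
    (hB : b ∈ Set.Icc 0 r₀) : Set.uIcc a b ⊆ Set.Icc (0:ℝ) r₀ := by
  rw [← Set.uIcc_of_le ha]
  exact Set.uIcc_subset_uIcc (by rwa [Set.uIcc_of_le ha]) (by rwa [Set.uIcc_of_le ha])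

/-- The LHS integral is weakly decreasing in `rs`. -/
private lemma A_anti (hr₀ : 0 ≤ r₀) (hτc : ContinuousOn τ (Set.Icc 0 r₀))
    (hτ0 : ∀ r ∈ Set.Icc (0:ℝ) r₀, 0 ≤ τ r)
    {s s' : ℝ} (hs : s ∈ Set.Icc 0 r₀) (hs' : s' ∈ Set.Icc 0 r₀) (hss : s ≤ s') :
    (∫ r in s'..r₀, (r - s') * τ r) ≤ ∫ r in s..r₀, (r - s) * τ r := by
  have hmem₀ : r₀ ∈ Set.Icc (0:ℝ) r₀ := ⟨hr₀, le_rfl⟩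
  have i1 : IntervalIntegrable (fun r => (r - s') * τ r) MeasureTheory.volume s' r₀ :=
    aux_ii hτc (by continuity) (uIcc_sub' hr₀ hs' hmem₀)
  have i2 : IntervalIntegrable (fun r => (r - s) * τ r) MeasureTheory.volume s' r₀ :=
    aux_ii hτc (by continuity) (uIcc_sub' hr₀ hs' hmem₀)
  have i3 : IntervalIntegrable (fun r => (r - s) * τ r) MeasureTheory.volume s s' :=
    aux_ii hτc (by continuity) (uIcc_sub' hr₀ hs hs')
  have h1 : (∫ r in s'..r₀, (r - s') * τ r) ≤ ∫ r in s'..r₀, (r - s) * τ r := by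
    apply intervalIntegral.integral_mono_on hs'.2 i1 i2
    intro x hx
    have hx0 : x ∈ Set.Icc (0:ℝ) r₀ := ⟨hs'.1.trans hx.1, hx.2⟩
    exact mul_le_mul_of_nonneg_right (by linarith) (hτ0 x hx0)
  have h2 : (0:ℝ) ≤ ∫ r in s..s', (r - s) * τ r := by
    apply intervalIntegral.integral_nonneg hss
    intro x hx
    have hx0 : x ∈ Set.Icc (0:ℝ) r₀ := ⟨hs.1.trans hx.1, hx.2.trans hs'.2⟩
    exact mul_nonneg (by linarith [hx.1]) (hτ0 x hx0)
  have hsplit : (∫ r in s..s', (r - s) * τ r) + (∫ r in s'..r₀, (r - s) * τ r)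
      = ∫ r in s..r₀, (r - s) * τ r :=
    intervalIntegral.integral_add_adjacent_intervals i3 i2
  linarith

/-- The RHS integral is weakly increasing in `rs`. -/
private lemma B_mono (hr₀ : 0 ≤ r₀) (hτc : ContinuousOn τ (Set.Icc 0 r₀))
    (hτ0 : ∀ r ∈ Set.Icc (0:ℝ) r₀, 0 ≤ τ r)
    {s s' : ℝ} (hs : s ∈ Set.Icc 0 r₀) (hs' : s' ∈ Set.Icc 0 r₀) (hss : s ≤ s') :
    ((∫ r in (0:ℝ)..s, (r + s) * τ r) + ∫ r in s..r₀, 2*s*τ r)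
      ≤ (∫ r in (0:ℝ)..s', (r + s') * τ r) + ∫ r in s'..r₀, 2*s'*τ r := by
  have hmem₀ : r₀ ∈ Set.Icc (0:ℝ) r₀ := ⟨hr₀, le_rfl⟩
  have hmem0 : (0:ℝ) ∈ Set.Icc (0:ℝ) r₀ := ⟨le_rfl, hr₀⟩
  have iA : IntervalIntegrable (fun r => (r + s) * τ r) MeasureTheory.volume 0 s :=
    aux_ii hτc (by continuity) (uIcc_sub' hr₀ hmem0 hs)
  have iA' : IntervalIntegrable (fun r => (r + s') * τ r) MeasureTheory.volume 0 s :=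
    aux_ii hτc (by continuity) (uIcc_sub' hr₀ hmem0 hs)
  have iB' : IntervalIntegrable (fun r => (r + s') * τ r) MeasureTheory.volume s s' :=
    aux_ii hτc (by continuity) (uIcc_sub' hr₀ hs hs')
  have iC : IntervalIntegrable (fun r => 2*s*τ r) MeasureTheory.volume s s' :=
    aux_ii hτc (by continuity) (uIcc_sub' hr₀ hs hs')
  have iC2 : IntervalIntegrable (fun r => 2*s*τ r) MeasureTheory.volume s' r₀ :=
    aux_ii hτc (by continuity) (uIcc_sub' hr₀ hs' hmem₀)
  have iC3 : IntervalIntegrable (fun r => 2*s'*τ r) MeasureTheory.volume s' r₀ :=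
    aux_ii hτc (by continuity) (uIcc_sub' hr₀ hs' hmem₀)
  -- split ∫_0^{s'} (r+s') = ∫_0^s + ∫_s^{s'}
  have hsplit1 : (∫ r in (0:ℝ)..s, (r + s') * τ r) + (∫ r in s..s', (r + s') * τ r)
      = ∫ r in (0:ℝ)..s', (r + s') * τ r :=
    intervalIntegral.integral_add_adjacent_intervals iA' iB'
  -- split ∫_s^{r₀} 2s = ∫_s^{s'} + ∫_{s'}^{r₀}
  have hsplit2 : (∫ r in s..s', 2*s*τ r) + (∫ r in s'..r₀, 2*s*τ r)
      = ∫ r in s..r₀, 2*s*τ r :=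
    intervalIntegral.integral_add_adjacent_intervals iC iC2
  have h1 : (∫ r in (0:ℝ)..s, (r + s) * τ r) ≤ ∫ r in (0:ℝ)..s, (r + s') * τ r := by
    apply intervalIntegral.integral_mono_on hs.1 iA iA'
    intro x hx
    have hx0 : x ∈ Set.Icc (0:ℝ) r₀ := ⟨hx.1, hx.2.trans hs.2⟩
    exact mul_le_mul_of_nonneg_right (by linarith) (hτ0 x hx0)
  have h2 : (∫ r in s..s', 2*s*τ r) ≤ ∫ r in s..s', (r + s') * τ r := by
    apply intervalIntegral.integral_mono_on hss iC iB'
    intro x hx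
    have hx0 : x ∈ Set.Icc (0:ℝ) r₀ := ⟨hs.1.trans hx.1, hx.2.trans hs'.2⟩
    exact mul_le_mul_of_nonneg_right (by linarith [hx.1]) (hτ0 x hx0)
  have h3 : (∫ r in s'..r₀, 2*s*τ r) ≤ ∫ r in s'..r₀, 2*s'*τ r := by
    apply intervalIntegral.integral_mono_on hs'.2 iC2 iC3
    intro x hx
    have hx0 : x ∈ Set.Icc (0:ℝ) r₀ := ⟨hs'.1.trans hx.1, hx.2⟩
    exact mul_le_mul_of_nonneg_right (by linarith) (hτ0 x hx0)
  linarith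

/-- Positivity of the LHS integral for `s < r₀`. -/
private lemma A_pos (hτc : ContinuousOn τ (Set.Icc 0 r₀))
    (hτpos : ∀ r ∈ Set.Icc (0:ℝ) r₀, 0 < τ r)
    {s : ℝ} (hs0 : 0 ≤ s) (hs : s < r₀) :
    0 < ∫ r in s..r₀, (r - s) * τ r := by
  have hr₀ : (0:ℝ) ≤ r₀ := hs0.trans hs.le
  have i1 : IntervalIntegrable (fun r => (r - s) * τ r) MeasureTheory.volume s r₀ :=
    aux_ii hτc (by continuity) (uIcc_sub' hr₀ ⟨hs0, hs.le⟩ ⟨hr₀, le_rfl⟩)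
  apply intervalIntegral.intervalIntegral_pos_of_pos_on i1 _ hs
  intro x hx
  have hx0 : x ∈ Set.Icc (0:ℝ) r₀ := ⟨hs0.trans hx.1.le, hx.2.le⟩
  exact mul_pos (by linarith [hx.1]) (hτpos x hx0)

/-- Positivity of the RHS for `0 < s`. -/
private lemma B_pos (hτc : ContinuousOn τ (Set.Icc 0 r₀))
    (hτpos : ∀ r ∈ Set.Icc (0:ℝ) r₀, 0 < τ r)
    {s : ℝ} (hs0 : 0 < s) (hs : s ≤ r₀) :
    0 < (∫ r in (0:ℝ)..s, (r + s) * τ r) + ∫ r in s..r₀, 2*s*τ r := by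
  have hr₀ : (0:ℝ) ≤ r₀ := hs0.le.trans hs
  have i1 : IntervalIntegrable (fun r => (r + s) * τ r) MeasureTheory.volume 0 s :=
    aux_ii hτc (by continuity) (uIcc_sub' hr₀ ⟨le_rfl, hr₀⟩ ⟨hs0.le, hs⟩)
  have h1 : 0 < ∫ r in (0:ℝ)..s, (r + s) * τ r := by
    apply intervalIntegral.intervalIntegral_pos_of_pos_on i1 _ hs0
    intro x hx
    have hx0 : x ∈ Set.Icc (0:ℝ) r₀ := ⟨hx.1.le, hx.2.le.trans hs⟩
    exact mul_pos (by linarith [hx.1]) (hτpos x hx0)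
  have h2 : 0 ≤ ∫ r in s..r₀, 2*s*τ r := by
    apply intervalIntegral.integral_nonneg hs
    intro x hx
    have hx0 : x ∈ Set.Icc (0:ℝ) r₀ := ⟨hs0.le.trans hx.1, hx.2⟩
    exact mul_nonneg (by linarith) (hτpos x hx0).le
  linarith

/-- Lower bound `s ≤ B s` using `∫ τ = 1`. -/
private lemma B_ge (hτc : ContinuousOn τ (Set.Icc 0 r₀))
    (hτ0 : ∀ r ∈ Set.Icc (0:ℝ) r₀, 0 ≤ τ r)
    (hτ1 : (∫ r in (0:ℝ)..r₀, τ r) = 1)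
    {s : ℝ} (hs : s ∈ Set.Icc 0 r₀) :
    s ≤ (∫ r in (0:ℝ)..s, (r + s) * τ r) + ∫ r in s..r₀, 2*s*τ r := by
  have hr₀ : (0:ℝ) ≤ r₀ := hs.1.trans hs.2
  have hmem0 : (0:ℝ) ∈ Set.Icc (0:ℝ) r₀ := ⟨le_rfl, hr₀⟩
  have hmem₀ : r₀ ∈ Set.Icc (0:ℝ) r₀ := ⟨hr₀, le_rfl⟩
  have iτ1 : IntervalIntegrable τ MeasureTheory.volume 0 s :=
    aux_iiτ hτc (uIcc_sub' hr₀ hmem0 hs)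
  have iτ2 : IntervalIntegrable τ MeasureTheory.volume s r₀ :=
    aux_iiτ hτc (uIcc_sub' hr₀ hs hmem₀)
  have iA : IntervalIntegrable (fun r => (r + s) * τ r) MeasureTheory.volume 0 s :=
    aux_ii hτc (by continuity) (uIcc_sub' hr₀ hmem0 hs)
  have iS1 : IntervalIntegrable (fun r => s * τ r) MeasureTheory.volume 0 s := iτ1.const_mul s
  have iS2 : IntervalIntegrable (fun r => s * τ r) MeasureTheory.volume s r₀ := iτ2.const_mul s
  have i2s : IntervalIntegrable (fun r => 2*s*τ r) MeasureTheory.volume s r₀ := by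
    have := iτ2.const_mul (2*s)
    simpa [mul_assoc] using this
  have h1 : (∫ r in (0:ℝ)..s, s * τ r) ≤ ∫ r in (0:ℝ)..s, (r + s) * τ r := by
    apply intervalIntegral.integral_mono_on hs.1 iS1 iA
    intro x hx
    have hx0 : x ∈ Set.Icc (0:ℝ) r₀ := ⟨hx.1, hx.2.trans hs.2⟩
    exact mul_le_mul_of_nonneg_right (by linarith [hx.1]) (hτ0 x hx0)
  have h2 : (∫ r in s..r₀, s * τ r) ≤ ∫ r in s..r₀, 2*s*τ r := by
    apply intervalIntegral.integral_mono_on hs.2 iS2 i2s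
    intro x hx
    have hx0 : x ∈ Set.Icc (0:ℝ) r₀ := ⟨hs.1.trans hx.1, hx.2⟩
    nlinarith [hτ0 x hx0, hs.1]
  have hτsplit : (∫ r in (0:ℝ)..s, τ r) + (∫ r in s..r₀, τ r) = 1 := by
    rw [intervalIntegral.integral_add_adjacent_intervals iτ1 iτ2, hτ1]
  have e1 : (∫ r in (0:ℝ)..s, s * τ r) = s * ∫ r in (0:ℝ)..s, τ r :=
    intervalIntegral.integral_const_mul s τ
  have e2 : (∫ r in s..r₀, s * τ r) = s * ∫ r in s..r₀, τ r :=
    intervalIntegral.integral_const_mul s τ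
  have key : s = (∫ r in (0:ℝ)..s, s * τ r) + ∫ r in s..r₀, s * τ r := by
    rw [e1, e2, ← mul_add, hτsplit, mul_one]
  linarith [h1, h2]

/-- Upper bound `A s ≤ r₀` using `∫ τ = 1`. -/
private lemma A_le (hr₀ : 0 ≤ r₀) (hτc : ContinuousOn τ (Set.Icc 0 r₀))
    (hτ0 : ∀ r ∈ Set.Icc (0:ℝ) r₀, 0 ≤ τ r)
    (hτ1 : (∫ r in (0:ℝ)..r₀, τ r) = 1)
    {s : ℝ} (hs : s ∈ Set.Icc 0 r₀) :
    (∫ r in s..r₀, (r - s) * τ r) ≤ r₀ := by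
  have hmem0 : (0:ℝ) ∈ Set.Icc (0:ℝ) r₀ := ⟨le_rfl, hr₀⟩
  have hmem₀ : r₀ ∈ Set.Icc (0:ℝ) r₀ := ⟨hr₀, le_rfl⟩
  have h0 : (∫ r in s..r₀, (r - s) * τ r) ≤ ∫ r in (0:ℝ)..r₀, (r - 0) * τ r :=
    A_anti hr₀ hτc hτ0 hmem0 hs hs.1
  have iτ : IntervalIntegrable τ MeasureTheory.volume 0 r₀ :=
    aux_iiτ hτc (uIcc_sub' hr₀ hmem0 hmem₀)
  have i1 : IntervalIntegrable (fun r => (r - 0) * τ r) MeasureTheory.volume 0 r₀ :=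
    aux_ii hτc (by continuity) (uIcc_sub' hr₀ hmem0 hmem₀)
  have i2 : IntervalIntegrable (fun r => r₀ * τ r) MeasureTheory.volume 0 r₀ := iτ.const_mul r₀
  have h1 : (∫ r in (0:ℝ)..r₀, (r - 0) * τ r) ≤ ∫ r in (0:ℝ)..r₀, r₀ * τ r := by
    apply intervalIntegral.integral_mono_on hr₀ i1 i2
    intro x hx
    exact mul_le_mul_of_nonneg_right (by linarith [hx.2]) (hτ0 x hx)
  have e : (∫ r in (0:ℝ)..r₀, r₀ * τ r) = r₀ * ∫ r in (0:ℝ)..r₀, τ r :=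
    intervalIntegral.integral_const_mul r₀ τ
  rw [e, hτ1, mul_one] at h1
  linarith

end aux2

/-- The solution `r*(α)` of the balancing equation is strictly increasing in `α` on
`(1/2, 1)`, tends to `0` as `α → 1/2⁺`, and at `α = 1` the equation is solved by `r₀`. -/
theorem stmt7 (r₀ : ℝ) (hr₀ : 0 < r₀) (τ : ℝ → ℝ)
    (hτc : ContinuousOn τ (Set.Icc 0 r₀))
    (hτpos : ∀ r ∈ Set.Icc (0:ℝ) r₀, 0 < τ r)
    (hτ1 : (∫ r in (0:ℝ)..r₀, τ r) = 1)
    (rstar : ℝ → ℝ)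
    (hsol : ∀ α ∈ Set.Ioo (1/2:ℝ) 1, rstar α ∈ Set.Ioo 0 r₀ ∧ balEq r₀ τ α (rstar α)) :
    StrictMonoOn rstar (Set.Ioo (1/2:ℝ) 1) ∧
    Filter.Tendsto rstar (nhdsWithin (1/2) (Set.Ioi (1/2))) (nhds 0) ∧
    balEq r₀ τ 1 r₀ := by
  have hτ0 : ∀ r ∈ Set.Icc (0:ℝ) r₀, 0 ≤ τ r := fun r hr => (hτpos r hr).le
  refine ⟨?_, ?_, ?_⟩
  · -- strict monotonicity
    intro α₁ h₁ α₂ h₂ h12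
    obtain ⟨hm₁, he₁⟩ := hsol α₁ h₁
    obtain ⟨hm₂, he₂⟩ := hsol α₂ h₂
    set s₁ := rstar α₁
    set s₂ := rstar α₂
    by_contra hcon
    push_neg at hcon
    have hs₁ : s₁ ∈ Set.Icc (0:ℝ) r₀ := ⟨hm₁.1.le, hm₁.2.le⟩
    have hs₂ : s₂ ∈ Set.Icc (0:ℝ) r₀ := ⟨hm₂.1.le, hm₂.2.le⟩
    have hA : (∫ r in s₁..r₀, (r - s₁) * τ r) ≤ ∫ r in s₂..r₀, (r - s₂) * τ r :=
      A_anti hr₀.le hτc hτ0 hs₂ hs₁ hcon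
    have hB : ((∫ r in (0:ℝ)..s₂, (r + s₂) * τ r) + ∫ r in s₂..r₀, 2*s₂*τ r)
        ≤ (∫ r in (0:ℝ)..s₁, (r + s₁) * τ r) + ∫ r in s₁..r₀, 2*s₁*τ r :=
      B_mono hr₀.le hτc hτ0 hs₂ hs₁ hcon
    have hApos : 0 < ∫ r in s₁..r₀, (r - s₁) * τ r := A_pos hτc hτpos hm₁.1.le hm₁.2
    have hBpos : 0 < (∫ r in (0:ℝ)..s₂, (r + s₂) * τ r) + ∫ r in s₂..r₀, 2*s₂*τ r :=
      B_pos hτc hτpos hm₂.1 hm₂.2.le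
    unfold balEq at he₁ he₂
    have hα1 : (1:ℝ)/2 < α₁ := h₁.1
    have hα2 : α₂ < 1 := h₂.2
    nlinarith [he₁, he₂, hA, hB, hApos, hBpos, h12]
  · -- limit at 1/2⁺
    have hupper : ∀ α ∈ Set.Ioo (1/2:ℝ) 1, rstar α ≤ (2*α - 1) * r₀ / (1 - α) := by
      intro α hα
      obtain ⟨hm, he⟩ := hsol α hα
      set s := rstar α
      have hs : s ∈ Set.Icc (0:ℝ) r₀ := ⟨hm.1.le, hm.2.le⟩
      have hBl : s ≤ (∫ r in (0:ℝ)..s, (r + s) * τ r) + ∫ r in s..r₀, 2*s*τ r :=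
        B_ge hτc hτ0 hτ1 hs
      have hAu : (∫ r in s..r₀, (r - s) * τ r) ≤ r₀ := A_le hr₀.le hτc hτ0 hτ1 hs
      unfold balEq at he
      have h1α : 0 < 1 - α := by linarith [hα.2]
      have h2α : 0 < 2*α - 1 := by linarith [hα.1]
      rw [le_div_iff₀ h1α]
      nlinarith [hBl, hAu, he]
    have hg : Filter.Tendsto (fun α : ℝ => (2*α - 1) * r₀ / (1 - α))
        (nhdsWithin (1/2) (Set.Ioi (1/2))) (nhds 0) := by
      have hc : ContinuousAt (fun α : ℝ => (2*α - 1) * r₀ / (1 - α)) (1/2) := by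
        apply ContinuousAt.div
        · fun_prop
        · fun_prop
        · norm_num
      have := hc.tendsto
      have hv : ((2*(1/2:ℝ) - 1) * r₀ / (1 - 1/2)) = 0 := by norm_num
      rw [hv] at this
      exact this.mono_left nhdsWithin_le_nhds
    have hmem : ∀ᶠ α in nhdsWithin (1/2:ℝ) (Set.Ioi (1/2)), α ∈ Set.Ioo (1/2:ℝ) 1 := by
      have h1 : ∀ᶠ α in nhdsWithin (1/2:ℝ) (Set.Ioi (1/2)), α ∈ Set.Ioi (1/2:ℝ) :=
        eventually_mem_nhdsWithin
      have h2 : ∀ᶠ α in nhdsWithin (1/2:ℝ) (Set.Ioi (1/2)), α < 1 := by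
        apply Filter.Eventually.filter_mono nhdsWithin_le_nhds
        exact Filter.Tendsto.eventually_lt_const (by norm_num) Filter.tendsto_id
      filter_upwards [h1, h2] with α ha hb
      exact ⟨ha, hb⟩
    apply tendsto_of_tendsto_of_tendsto_of_le_of_le' tendsto_const_nhds hg
    · filter_upwards [hmem] with α hα
      exact (hsol α hα).1.1.le
    · filter_upwards [hmem] with α hα
      exact hupper α hα
  · -- α = 1, rs = r₀
    unfold balEq
    norm_num
end

section
/- Let W ⊆ ℝ^K be an (R−1)-dimensional linear subspace (2 ≤ R) contained in {w : wᵀ1_K = 0}, and suppose there exist w_1,…,w_{R−1} ∈ W and x_1,…,x_{R−1} ∈ ℝ^K with ‖w_i‖₁ = 1, ‖x_i‖_∞ = 1, and w_iᵀx_j = δ_{ij} (an Auerbach system). Define w̄ ∈ ℝ^K by w̄_k = Σ_i |w_{i,k}|, and B = (1/(R−1))(1_K w̄ᵀ − X Wᵀ) where W = (w_1,…,w_{R−1}) and X = (x_1,…,x_{R−1}) as K×(R−1) matrices. Then: (a) B has nonnegative entries; (b) B·1_K = 1_K; (c) Wᵀ B = −(1/(R−1)) Wᵀ. -/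
/-!
Since `|x_{i,j}| ≤ 1`, each entry `x_{i,j} w_{i,k}` of `X Wᵀ` is dominated by `|w_{i,k}|`, so
`1 w̄ᵀ − X Wᵀ` is entrywise nonnegative. Its row sums are `Σ_i ‖w_i‖₁ − Σ_i x_{i,j} (w_iᵀ 1) = R − 1`,
and multiplying by `Wᵀ` kills `1 w̄ᵀ` (as `Wᵀ 1 = 0`) while `Wᵀ X = I` turns `−X Wᵀ` into `−Wᵀ`.
-/

open Finset

theorem Finset.sum_mul_le_sum_abs_of_abs_le_one {ι : Type*} {s : Finset ι} {a b : ι → ℝ}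
    (ha : ∀ i ∈ s, |a i| ≤ 1) : ∑ i ∈ s, a i * b i ≤ ∑ i ∈ s, |b i| :=
  sum_le_sum fun i hi =>
    calc a i * b i ≤ |a i * b i| := le_abs_self _
      _ = |a i| * |b i| := abs_mul _ _
      _ ≤ |b i| := mul_le_of_le_one_left (abs_nonneg _) (ha i hi)

section AuerbachGarbling

variable {ι κ : Type*} [Fintype ι] [Fintype κ]

theorem sum_sum_abs_sub_sum_mul_eq_card (w x : ι → κ → ℝ) (hw1 : ∀ i, ∑ k, |w i k| = 1)
    (horth : ∀ i, ∑ k, w i k = 0) (j : κ) :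
    ∑ k, ((∑ i, |w i k|) - ∑ i, x i j * w i k) = Fintype.card ι := by
  have hsum_abs : ∑ k, ∑ i, |w i k| = Fintype.card ι := by
    rw [sum_comm, sum_congr rfl fun i _ => hw1 i, sum_const, nsmul_one, card_univ]
  have hsum_mul : ∑ k, ∑ i, x i j * w i k = 0 := by
    rw [sum_comm]
    simp only [← mul_sum, horth, mul_zero, sum_const_zero]
  rw [sum_sub_distrib, hsum_abs, hsum_mul, sub_zero]

theorem sum_mul_sum_abs_sub_sum_mul_eq_neg [DecidableEq ι] (w x : ι → κ → ℝ)
    (hdual : ∀ i j, ∑ k, w i k * x j k = if i = j then 1 else 0)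
    (horth : ∀ i, ∑ k, w i k = 0) (i : ι) (k : κ) :
    ∑ j, w i j * ((∑ i', |w i' k|) - ∑ i', x i' j * w i' k) = -w i k := by
  have hdual_sum : ∑ j, w i j * ∑ i', x i' j * w i' k = w i k := by
    simp only [mul_sum]
    rw [sum_comm]
    simp only [← mul_assoc, ← sum_mul, hdual, ite_mul, one_mul, zero_mul, sum_ite_eq,
      mem_univ, if_true]
  simp only [mul_sub, sum_sub_distrib]
  rw [hdual_sum, ← sum_mul, horth, zero_mul, zero_sub]

end AuerbachGarbling

theorem stmt12_general (K R : ℕ) (hR : 2 ≤ R)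
    (w x : Fin (R - 1) → Fin K → ℝ)
    (hw1 : ∀ i, ∑ k, |w i k| = 1)
    (hxle : ∀ i k, |x i k| ≤ 1)
    (hdual : ∀ i j, ∑ k, w i k * x j k = if i = j then 1 else 0)
    (horth : ∀ i, ∑ k, w i k = 0) :
    (∀ j k, 0 ≤ (1 / ((R:ℝ) - 1)) * ((∑ i, |w i k|) - ∑ i, x i j * w i k)) ∧
    (∀ j, ∑ k, (1 / ((R:ℝ) - 1)) * ((∑ i, |w i k|) - ∑ i, x i j * w i k) = 1) ∧
    (∀ i k, ∑ j, w i j * ((1 / ((R:ℝ) - 1)) * ((∑ i', |w i' k|) - ∑ i', x i' j * w i' k))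
        = -(1 / ((R:ℝ) - 1)) * w i k) := by
  have hcard : (Fintype.card (Fin (R - 1)) : ℝ) = (R:ℝ) - 1 := by
    rw [Fintype.card_fin, Nat.cast_sub (by omega), Nat.cast_one]
  have hpos : (0:ℝ) < (R:ℝ) - 1 := by
    have : (2:ℝ) ≤ R := by exact_mod_cast hR
    linarith
  refine ⟨fun j k => ?_, fun j => ?_, fun i k => ?_⟩
  · exact mul_nonneg (by positivity)
      (sub_nonneg.2 (sum_mul_le_sum_abs_of_abs_le_one fun i _ => hxle i j))
  · rw [← mul_sum, sum_sum_abs_sub_sum_mul_eq_card w x hw1 horth j, hcard, one_div,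
      inv_mul_cancel₀ hpos.ne']
  · simp only [mul_left_comm (w i _), ← mul_sum]
    rw [sum_mul_sum_abs_sub_sum_mul_eq_neg w x hdual horth i k, mul_neg, neg_mul]

/-- The Auerbach-system construction of an adversarial garbling: given an Auerbach system
`(w_i, x_i)` in the subspace orthogonal to the all-ones vector, the matrix
`B = (1/(R−1))(1 w̄ᵀ − X Wᵀ)` is nonnegative, row-stochastic, and satisfies
`Wᵀ B = −(1/(R−1)) Wᵀ`. -/
theorem stmt12 (K R : ℕ) (hR : 2 ≤ R) (hRK : R - 1 ≤ K)
    (w x : Fin (R - 1) → Fin K → ℝ)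
    (hw1 : ∀ i, ∑ k, |w i k| = 1)
    (hxle : ∀ i k, |x i k| ≤ 1)
    (hx1 : ∀ i, ∃ k, |x i k| = 1)
    (hdual : ∀ i j, ∑ k, w i k * x j k = if i = j then 1 else 0)
    (horth : ∀ i, ∑ k, w i k = 0) :
    (∀ j k, 0 ≤ (1 / ((R:ℝ) - 1)) * ((∑ i, |w i k|) - ∑ i, x i j * w i k)) ∧
    (∀ j, ∑ k, (1 / ((R:ℝ) - 1)) * ((∑ i, |w i k|) - ∑ i, x i j * w i k) = 1) ∧
    (∀ i k, ∑ j, w i j * ((1 / ((R:ℝ) - 1)) * ((∑ i', |w i' k|) - ∑ i', x i' j * w i' k))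
        = -(1 / ((R:ℝ) - 1)) * w i k) :=
  stmt12_general K R hR w x hw1 hxle hdual horth
end

section
/- Let G, L > 0 with G ≠ L, α ∈ (0,1), and define the objective f(σ_L, σ_H) = σ_L((1−α)G − αL) + σ_H(αG − (1−α)L) over the triangle Δ = {(σ_L, σ_H) : 0 ≤ σ_L ≤ σ_H ≤ 1}. Let α̂ = max{L, G}/(L + G). Then: (i) if α > α̂, the unique maximizer of f on Δ is (σ_L, σ_H) = (0, 1); (ii) if α < α̂ and G > L, the unique maximizer is (1, 1); (iii) if α < α̂ and G < L, the unique maximizer is (0, 0). -/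
/-- The binary-action solution: the linear objective
`f(σ_L, σ_H) = σ_L((1−α)G − αL) + σ_H(αG − (1−α)L)` over the triangle
`0 ≤ σ_L ≤ σ_H ≤ 1` is uniquely maximized at `(0,1)` when `α > α̂`, at `(1,1)` when
`α < α̂` and `G > L`, and at `(0,0)` when `α < α̂` and `G < L`, where
`α̂ = max{L,G}/(L+G)`. -/
theorem stmt14 (G L α : ℝ) (hG : 0 < G) (hL : 0 < L) (hGL : G ≠ L)
    (hα : α ∈ Set.Ioo (0:ℝ) 1) :
    (max L G / (L + G) < α →
      ∀ sL sH : ℝ, 0 ≤ sL → sL ≤ sH → sH ≤ 1 → ¬(sL = 0 ∧ sH = 1) →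
        sL * ((1-α)*G - α*L) + sH * (α*G - (1-α)*L) <
        0 * ((1-α)*G - α*L) + 1 * (α*G - (1-α)*L)) ∧
    (α < max L G / (L + G) → L < G →
      ∀ sL sH : ℝ, 0 ≤ sL → sL ≤ sH → sH ≤ 1 → ¬(sL = 1 ∧ sH = 1) →
        sL * ((1-α)*G - α*L) + sH * (α*G - (1-α)*L) <
        1 * ((1-α)*G - α*L) + 1 * (α*G - (1-α)*L)) ∧
    (α < max L G / (L + G) → G < L →
      ∀ sL sH : ℝ, 0 ≤ sL → sL ≤ sH → sH ≤ 1 → ¬(sL = 0 ∧ sH = 0) →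
        sL * ((1-α)*G - α*L) + sH * (α*G - (1-α)*L) <
        0 * ((1-α)*G - α*L) + 0 * (α*G - (1-α)*L)) := by
  obtain ⟨hα0, hα1⟩ := hα
  have hLG : 0 < L + G := by linarith
  refine ⟨?_, ?_, ?_⟩
  · intro h sL sH h0 h01 h1 hne
    have hmax : max L G < α * (L + G) := by
      rw [div_lt_iff₀ hLG] at h; linarith [h]
    have hLlt : L < α * (L + G) := lt_of_le_of_lt (le_max_left _ _) hmax
    have hGlt : G < α * (L + G) := lt_of_le_of_lt (le_max_right _ _) hmax
    rcases lt_or_eq_of_le h0 with hp | hz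
    · nlinarith [mul_pos hp (by nlinarith : (0:ℝ) < α*L - (1-α)*G), mul_nonneg (sub_nonneg.2 h1) (by nlinarith : (0:ℝ) ≤ α*G - (1-α)*L)]
    · have hsH : sH < 1 := lt_of_le_of_ne h1 (fun he => hne ⟨hz.symm, he⟩)
      nlinarith [mul_pos (sub_pos.2 hsH) (by nlinarith : (0:ℝ) < α*G - (1-α)*L)]
  · intro h hLG2 sL sH h0 h01 h1 hne
    have hmax : α * (L + G) < max L G := by
      rw [lt_div_iff₀ hLG] at h; linarith [h]
    have hGgt : α * (L + G) < G := by
      have : max L G = G := max_eq_right hLG2.le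
      linarith [hmax, this ▸ hmax]
    have hA : (0:ℝ) < (1-α)*G - α*L := by nlinarith
    rcases lt_or_eq_of_le h01 with hp | hz
    · nlinarith [mul_pos (sub_pos.2 hp) hA, mul_nonneg (sub_nonneg.2 h1) (by linarith : (0:ℝ) ≤ (1-α)*G - α*L + (α*G - (1-α)*L))]
    · have hsH : sH < 1 := by
        rcases lt_or_eq_of_le h1 with h' | h'
        · exact h'
        · exact absurd ⟨hz.trans h', h'⟩ hne
      nlinarith [mul_pos (sub_pos.2 hsH) (by linarith : (0:ℝ) < (1-α)*G - α*L + (α*G - (1-α)*L))]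
  · intro h hGL2 sL sH h0 h01 h1 hne
    have hmax : α * (L + G) < max L G := by
      rw [lt_div_iff₀ hLG] at h; linarith [h]
    have hLgt : α * (L + G) < L := by
      have hm : max L G = L := max_eq_left hGL2.le
      linarith [hm ▸ hmax]
    have hB : α*G - (1-α)*L < 0 := by nlinarith
    rcases lt_or_eq_of_le h0 with hp | hz
    · nlinarith [mul_pos hp (by linarith : (0:ℝ) < (1-α)*L - α*G + (α*L - (1-α)*G)), mul_nonneg (sub_nonneg.2 h01) (by linarith : (0:ℝ) ≤ (1-α)*L - α*G)]
    · have hsH : 0 < sH := by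
        rcases lt_or_eq_of_le (hz ▸ h01) with h' | h'
        · exact h'
        · exact absurd ⟨hz.symm, h'.symm⟩ hne
      nlinarith [mul_pos hsH (by linarith : (0:ℝ) < (1-α)*L - α*G)]
end

section
/- Let τ be a strictly positive continuous probability density on [0,1], α ∈ [0,1], and suppose 0 ≤ μ̲ ≤ b ≤ μ̄ ≤ 1 satisfy the two balancing conditions α∫₀^{μ̲}(μ − μ̲)τdμ + (1−α)∫_b¹(μ − μ̲)τdμ = 0 and α∫_{μ̄}¹(μ − μ̄)τdμ + (1−α)∫₀^b(μ − μ̄)τdμ = 0. Then α ≥ 1/2. -/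
open intervalIntegral

/-- If the two balancing conditions of the binary-state trust region hold for a full
support density `τ` with `0 ≤ μ̲ ≤ b ≤ μ̄ ≤ 1`, then `α ≥ 1/2`. -/
theorem stmt18 (τ : ℝ → ℝ) (hτc : ContinuousOn τ (Set.Icc 0 1))
    (hτpos : ∀ μ ∈ Set.Icc (0:ℝ) 1, 0 < τ μ)
    (hτ1 : (∫ μ in (0:ℝ)..1, τ μ) = 1)
    (α : ℝ) (hα : α ∈ Set.Icc (0:ℝ) 1)
    (μl b μh : ℝ) (h0 : 0 ≤ μl) (h1 : μl ≤ b) (h2 : b ≤ μh) (h3 : μh ≤ 1)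
    (heq1 : α * (∫ μ in (0:ℝ)..μl, (μ - μl) * τ μ) +
            (1-α) * (∫ μ in b..1, (μ - μl) * τ μ) = 0)
    (heq2 : α * (∫ μ in μh..1, (μ - μh) * τ μ) +
            (1-α) * (∫ μ in (0:ℝ)..b, (μ - μh) * τ μ) = 0) :
    1/2 ≤ α := by
  obtain ⟨hα0, hα1⟩ := hα
  have hb0 : (0:ℝ) ≤ b := h0.trans h1
  have hb1 : b ≤ 1 := h2.trans h3
  have hμl1 : μl ≤ 1 := h1.trans hb1
  have hμh0 : (0:ℝ) ≤ μh := hb0.trans h2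
  have hμlm : μl ∈ Set.Icc (0:ℝ) 1 := ⟨h0, hμl1⟩
  have hμhm : μh ∈ Set.Icc (0:ℝ) 1 := ⟨hμh0, h3⟩
  have hbm : b ∈ Set.Icc (0:ℝ) 1 := ⟨hb0, hb1⟩
  have h0m : (0:ℝ) ∈ Set.Icc (0:ℝ) 1 := ⟨le_refl 0, zero_le_one⟩
  have h1m : (1:ℝ) ∈ Set.Icc (0:ℝ) 1 := ⟨zero_le_one, le_refl 1⟩
  -- integrability of continuous multiples of τ on subintervals of [0,1]
  have hInt : ∀ f : ℝ → ℝ, ContinuousOn f (Set.Icc 0 1) → ∀ p q : ℝ,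
      p ∈ Set.Icc (0:ℝ) 1 → q ∈ Set.Icc (0:ℝ) 1 →
      IntervalIntegrable (fun μ => f μ * τ μ) MeasureTheory.volume p q := by
    intro f hf p q hp hq
    apply ContinuousOn.intervalIntegrable
    apply (hf.mul hτc).mono
    rw [show Set.Icc (0:ℝ) 1 = Set.uIcc (0:ℝ) 1 from (Set.uIcc_of_le zero_le_one).symm]
    exact Set.uIcc_subset_uIcc
      (by rw [Set.uIcc_of_le zero_le_one]; exact hp)
      (by rw [Set.uIcc_of_le zero_le_one]; exact hq)
  have hIntc : ∀ c p q : ℝ, p ∈ Set.Icc (0:ℝ) 1 → q ∈ Set.Icc (0:ℝ) 1 →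
      IntervalIntegrable (fun μ => (μ - c) * τ μ) MeasureTheory.volume p q := by
    intro c p q hp hq
    exact hInt (fun μ => μ - c) (continuousOn_id.sub continuousOn_const) p q hp hq
  have hnonpos : ∀ (f : ℝ → ℝ) (p q : ℝ), IntervalIntegrable f MeasureTheory.volume p q →
      p ≤ q → (∀ u ∈ Set.Icc p q, f u ≤ 0) → (∫ μ in p..q, f μ) ≤ 0 := by
    intro f p q hf hpq hle
    have h := integral_mono_on (f := f) (g := fun _ => (0:ℝ)) hpq hf
      intervalIntegrable_const hle
    simpa using h
  -- key pointwise monotonicity comparisons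
  -- (a) J(b,0,b) ≤ J(μl,0,μl)
  have ha : (∫ μ in (0:ℝ)..b, (μ - b) * τ μ) ≤ ∫ μ in (0:ℝ)..μl, (μ - μl) * τ μ := by
    have hsplit : (∫ μ in (0:ℝ)..μl, (μ - b) * τ μ) + (∫ μ in μl..b, (μ - b) * τ μ)
        = ∫ μ in (0:ℝ)..b, (μ - b) * τ μ :=
      integral_add_adjacent_intervals (hIntc b 0 μl h0m hμlm)
        (hIntc b μl b hμlm hbm)
    have hneg : (∫ μ in μl..b, (μ - b) * τ μ) ≤ 0 := by
      apply hnonpos _ _ _ (hIntc b μl b hμlm hbm) h1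
      intro u hu
      have hu01 : u ∈ Set.Icc (0:ℝ) 1 := ⟨h0.trans hu.1, hu.2.trans hb1⟩
      have := (hτpos u hu01).le
      nlinarith [hu.2]
    have hmono : (∫ μ in (0:ℝ)..μl, (μ - b) * τ μ) ≤ ∫ μ in (0:ℝ)..μl, (μ - μl) * τ μ := by
      apply integral_mono_on h0 (hIntc b 0 μl h0m hμlm)
        (hIntc μl 0 μl h0m hμlm)
      intro x hx
      have hx01 : x ∈ Set.Icc (0:ℝ) 1 := ⟨hx.1, hx.2.trans hμl1⟩
      exact mul_le_mul_of_nonneg_right (by linarith) (hτpos x hx01).le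
    linarith
  -- (b) J(μh,μh,1) ≤ J(b,b,1)
  have hb : (∫ μ in μh..1, (μ - μh) * τ μ) ≤ ∫ μ in b..1, (μ - b) * τ μ := by
    have hsplit : (∫ μ in b..μh, (μ - b) * τ μ) + (∫ μ in μh..1, (μ - b) * τ μ)
        = ∫ μ in b..1, (μ - b) * τ μ :=
      integral_add_adjacent_intervals (hIntc b b μh hbm hμhm)
        (hIntc b μh 1 hμhm h1m)
    have hpos : (0:ℝ) ≤ ∫ μ in b..μh, (μ - b) * τ μ := by
      apply integral_nonneg h2
      intro u hu
      have hu01 : u ∈ Set.Icc (0:ℝ) 1 := ⟨hb0.trans hu.1, hu.2.trans h3⟩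
      have := (hτpos u hu01).le
      nlinarith [hu.1]
    have hmono : (∫ μ in μh..1, (μ - μh) * τ μ) ≤ ∫ μ in μh..1, (μ - b) * τ μ := by
      apply integral_mono_on h3 (hIntc μh μh 1 hμhm h1m)
        (hIntc b μh 1 hμhm h1m)
      intro x hx
      have hx01 : x ∈ Set.Icc (0:ℝ) 1 := ⟨hμh0.trans hx.1, hx.2⟩
      exact mul_le_mul_of_nonneg_right (by linarith) (hτpos x hx01).le
    linarith
  -- (c) J(b,b,1) ≤ J(μl,b,1)
  have hc : (∫ μ in b..1, (μ - b) * τ μ) ≤ ∫ μ in b..1, (μ - μl) * τ μ := by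
    apply integral_mono_on hb1 (hIntc b b 1 hbm h1m)
      (hIntc μl b 1 hbm h1m)
    intro x hx
    have hx01 : x ∈ Set.Icc (0:ℝ) 1 := ⟨hb0.trans hx.1, hx.2⟩
    exact mul_le_mul_of_nonneg_right (by linarith) (hτpos x hx01).le
  -- (d) J(μh,0,b) ≤ J(b,0,b)
  have hd : (∫ μ in (0:ℝ)..b, (μ - μh) * τ μ) ≤ ∫ μ in (0:ℝ)..b, (μ - b) * τ μ := by
    apply integral_mono_on hb0 (hIntc μh 0 b h0m hbm)
      (hIntc b 0 b h0m hbm)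
    intro x hx
    have hx01 : x ∈ Set.Icc (0:ℝ) 1 := ⟨hx.1, hx.2.trans hb1⟩
    exact mul_le_mul_of_nonneg_right (by linarith) (hτpos x hx01).le
  -- nonpositivity / nonnegativity of the two b-integrals
  have hJ0b : (∫ μ in (0:ℝ)..b, (μ - b) * τ μ) ≤ 0 := by
    apply hnonpos _ _ _ (hIntc b 0 b h0m hbm) hb0
    intro u hu
    have hu01 : u ∈ Set.Icc (0:ℝ) 1 := ⟨hu.1, hu.2.trans hb1⟩
    have := (hτpos u hu01).le
    nlinarith [hu.2]
  have hJb1 : (0:ℝ) ≤ ∫ μ in b..1, (μ - b) * τ μ := by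
    apply integral_nonneg hb1
    intro u hu
    have hu01 : u ∈ Set.Icc (0:ℝ) 1 := ⟨hb0.trans hu.1, hu.2⟩
    have := (hτpos u hu01).le
    nlinarith [hu.1]
  -- strict positivity of S = J(b,b,1) - J(b,0,b)
  have hS : (0:ℝ) < (∫ μ in b..1, (μ - b) * τ μ) - ∫ μ in (0:ℝ)..b, (μ - b) * τ μ := by
    rcases lt_or_eq_of_le hb1 with hlt | heqb
    · have hpos : (0:ℝ) < ∫ μ in b..1, (μ - b) * τ μ := by
        apply intervalIntegral_pos_of_pos_on (hIntc b b 1 hbm h1m) _ hlt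
        intro x hx
        have hx01 : x ∈ Set.Icc (0:ℝ) 1 := ⟨hb0.trans hx.1.le, hx.2.le⟩
        exact mul_pos (by linarith [hx.1] : (0:ℝ) < x - b) (hτpos x hx01)
      linarith
    · have hb0' : (0:ℝ) < b := by linarith
      have hposneg : (0:ℝ) < ∫ μ in (0:ℝ)..b, (b - μ) * τ μ := by
        apply intervalIntegral_pos_of_pos_on
          (hInt (fun μ => b - μ) (continuousOn_const.sub continuousOn_id) 0 b h0m hbm) _ hb0'
        intro x hx
        have hx01 : x ∈ Set.Icc (0:ℝ) 1 := ⟨hx.1.le, hx.2.le.trans hb1⟩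
        exact mul_pos (by linarith [hx.2] : (0:ℝ) < b - x) (hτpos x hx01)
      have hflip : (∫ μ in (0:ℝ)..b, (b - μ) * τ μ)
          = -(∫ μ in (0:ℝ)..b, (μ - b) * τ μ) := by
        rw [← integral_neg]
        congr 1
        ext μ
        ring
      linarith
  -- chain the inequalities
  nlinarith [mul_le_mul_of_nonneg_left ha hα0, mul_le_mul_of_nonneg_left hb hα0,
    mul_le_mul_of_nonneg_left hc (by linarith : (0:ℝ) ≤ 1 - α),
    mul_le_mul_of_nonneg_left hd (by linarith : (0:ℝ) ≤ 1 - α), hS, heq1, heq2]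
end
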